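/- Let β > 0 be fixed and let p = p(N) ∈ (0,1] be a sequence with p(N)·N → ∞. Then there exists a constant C > 0 such that for all sufficiently large N and all σ, τ ∈ {-1,+1}^N, | log E[e^{-βH(σ)} e^{-βH(τ)}] - (β/2)·(|σ|² + |τ|²)/N - ( (N²p/2)(cosh(β/(Np)) - 1) - β²/4 )·(1 + |στ|²/N²) | ≤ (C/(N²p²)) · ( (|σ|² + |τ|²)/N + 1 + |στ|²/N² ), where |σ| = Σ_{i=1}^N σ_i and |στ| = Σ_{i=1}^N σ_i τ_i. -/

import Mathlib

open MeasureTheory ProbabilityTheory Filter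
open scoped Classical

noncomputable section

/-- The spin value `±1` associated to a Boolean. -/
def spin (b : Bool) : ℝ := if b then 1 else -1

/-- The total magnetization `|σ| = σ₁ + ⋯ + σ_N` of a spin configuration. -/
def mag {N : ℕ} (σ : Fin N → Bool) : ℝ := ∑ i, spin (σ i)

/-- The overlap `|στ| = ∑ σᵢτᵢ` of two spin configurations. -/
def magPair {N : ℕ} (σ τ : Fin N → Bool) : ℝ := ∑ i, spin (σ i) * spin (τ i)

/-- The Hamiltonian `H(σ) = -(1/(2Np)) ∑_{i,j} ε_{i,j} σᵢ σⱼ` of the Ising model on the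
directed Erdős–Rényi graph with edge indicators `ε`. -/
def hamil (N : ℕ) (p : ℝ) (ε : Fin N × Fin N → Bool) (σ : Fin N → Bool) : ℝ :=
  -(1 / (2 * N * p)) * ∑ i : Fin N, ∑ j : Fin N,
    (if ε (i, j) then (1 : ℝ) else 0) * spin (σ i) * spin (σ j)

/-- The joint law of the i.i.d. Bernoulli(p) edge indicators `(ε_{i,j})_{i,j=1}^N`. -/
def bern (N : ℕ) (p : ℝ) : Measure (Fin N × Fin N → Bool) :=
  Measure.pi fun _ => (PMF.bernoulli (min 1 (Real.toNNReal p)) (min_le_left _ _)).toMeasure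

/-- The generalized partition function `Z_N(β, g) = ∑_σ e^{-βH(σ)} g(|σ|/√N)`. -/
def ZNg (N : ℕ) (p β : ℝ) (g : ℝ → ℝ) (ε : Fin N × Fin N → Bool) : ℝ :=
  ∑ σ : Fin N → Bool, Real.exp (-β * hamil N p ε σ) * g (mag σ / Real.sqrt N)

/-- The expectation `𝔼 Z_N(β, g)` over the randomness of the graph. -/
def EZNg (N : ℕ) (p β : ℝ) (g : ℝ → ℝ) : ℝ :=
  ∫ ε, ZNg N p β g ε ∂(bern N p)

/-- The Gaussian expectation `𝔼_ξ [g(ξ) e^{β ξ²/2}]` for a standard normal `ξ`. -/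
def gaussExp (β : ℝ) (g : ℝ → ℝ) : ℝ :=
  ∫ x, g x * Real.exp (β * x ^ 2 / 2) ∂(gaussianReal 0 1)

/-!
Given the graph, the two Boltzmann factors multiply to `∏_{i,j} exp (c ε_{ij} s_{ij})` with
`c = β/(2Np)` and `s_{ij} = σᵢσⱼ + τᵢτⱼ ∈ {-2, 0, 2}`, so by independence the expectation is
`∏_{i,j} (1 - p + p e^{c s_{ij}})`. Its logarithm is a sum of values of the Bernoulli cumulant
generating function `φ(y) = log (1 - p + p e^y)` at `y = c s_{ij}`, and interpolating at
`s ∈ {-2, 0, 2}` gives exactly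
`log 𝔼 = (|σ|² + |τ|²)/4 · (φ(x) - φ(-x)) + (N² + |στ|²)/4 · (φ(x) + φ(-x))` with `x = β/(Np)`.
Taylor expansion gives `φ(x) - φ(-x) = 2px + O(px³)` and
`φ(x) + φ(-x) = log (1 + 2p(1-p)(cosh x - 1)) = 2p(cosh x - 1) - p²x² + O(p²x⁴)`; as `x → 0`
when `Np → ∞`, the two error terms are `O(1/(N²p²))` times `(|σ|² + |τ|²)/N` and
`1 + |στ|²/N²` respectively.
-/

open Real Finset

section Analytic

variable {x u : ℝ}

lemma abs_exp_sub_taylor_three_le (hx : |x| ≤ 1) :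
    |exp x - (1 + x + x ^ 2 / 2)| ≤ |x| ^ 3 := by
  have h := Real.exp_bound hx (n := 3) (by norm_num)
  have taylor : ∑ m ∈ range 3, x ^ m / m.factorial = 1 + x + x ^ 2 / 2 := by
    norm_num [sum_range_succ]
  rw [taylor] at h
  exact h.trans (mul_le_of_le_one_right (by positivity) (by norm_num [Nat.factorial]))

lemma abs_exp_sub_taylor_four_le (hx : |x| ≤ 1) :
    |exp x - (1 + x + x ^ 2 / 2 + x ^ 3 / 6)| ≤ x ^ 4 := by
  have h := Real.exp_bound hx (n := 4) (by norm_num)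
  have taylor : ∑ m ∈ range 4, x ^ m / m.factorial = 1 + x + x ^ 2 / 2 + x ^ 3 / 6 := by
    norm_num [sum_range_succ, Nat.factorial]
  rw [taylor, pow_abs, abs_of_nonneg (by positivity : 0 ≤ x ^ 4)] at h
  exact h.trans (mul_le_of_le_one_right (by positivity) (by norm_num [Nat.factorial]))

lemma cosh_sub_one_le_sq (hx : |x| ≤ 1) : cosh x - 1 ≤ x ^ 2 := by
  have hp := abs_le.1 (abs_exp_sub_one_sub_id_le hx)
  have hm := abs_le.1 (abs_exp_sub_one_sub_id_le (x := -x) (by rwa [abs_neg]))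
  rw [cosh_eq]
  nlinarith [hp.2, hm.2]

lemma abs_sinh_sub_self_le (hx : |x| ≤ 1) : |sinh x - x| ≤ |x| ^ 3 := by
  have hp := abs_le.1 (abs_exp_sub_taylor_three_le hx)
  have hm := abs_le.1 (abs_exp_sub_taylor_three_le (x := -x) (by rwa [abs_neg]))
  rw [abs_neg] at hm
  rw [sinh_eq, abs_le]
  constructor <;> nlinarith

lemma abs_sinh_mul_cosh_sub_one_le (hx : |x| ≤ 1) : |sinh x * (cosh x - 1)| ≤ 2 * |x| ^ 3 := by
  have hsinh : |sinh x| ≤ 2 * |x| := by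
    have := abs_sub_abs_le_abs_sub (sinh x) x
    linarith [abs_sinh_sub_self_le hx, pow_le_of_le_one (abs_nonneg x) hx (n := 3) (by norm_num)]
  have hcosh0 : 0 ≤ cosh x - 1 := by linarith [one_le_cosh x]
  rw [abs_mul, abs_of_nonneg hcosh0]
  calc |sinh x| * (cosh x - 1) ≤ (2 * |x|) * |x| ^ 2 :=
        mul_le_mul hsinh (by rw [sq_abs]; exact cosh_sub_one_le_sq hx) hcosh0 (by positivity)
    _ = 2 * |x| ^ 3 := by ring

lemma abs_cosh_sub_one_sub_sq_le (hx : |x| ≤ 1) : |cosh x - 1 - x ^ 2 / 2| ≤ x ^ 4 := by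
  have hp := abs_le.1 (abs_exp_sub_taylor_four_le hx)
  have hm := abs_le.1 (abs_exp_sub_taylor_four_le (x := -x) (by rwa [abs_neg]))
  rw [cosh_eq, abs_le]
  constructor <;> nlinarith

lemma abs_log_one_add_sub_self_le (hu : |u| ≤ 1 / 2) : |log (1 + u) - u| ≤ 2 * u ^ 2 := by
  have h := abs_log_sub_add_sum_range_le (x := -u) (by rw [abs_neg]; linarith) 1
  norm_num [abs_neg] at h
  rw [show -u + log (1 + u) = log (1 + u) - u by ring] at h
  refine h.trans ?_
  rw [div_le_iff₀ (by linarith), ← sq_abs u]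
  nlinarith [abs_nonneg u]

lemma abs_log_one_add_sub_taylor_two_le (hu : |u| ≤ 1 / 2) :
    |log (1 + u) - (u - u ^ 2 / 2)| ≤ 2 * |u| ^ 3 := by
  have h := abs_log_sub_add_sum_range_le (x := -u) (by rw [abs_neg]; linarith) 2
  norm_num [sum_range_succ, abs_neg] at h
  rw [show -u + u ^ 2 / 2 + log (1 + u) = log (1 + u) - (u - u ^ 2 / 2) by ring] at h
  refine h.trans ?_
  rw [div_le_iff₀ (by linarith)]
  nlinarith [abs_nonneg u, pow_nonneg (abs_nonneg u) 3]

end Analytic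

/-- `log 𝔼 e^{xε}` for `ε ∼ Bernoulli(p)`. -/
def bernCgf (p x : ℝ) : ℝ := log (1 - p + p * exp x)

section BernCgf

variable {p x : ℝ}

lemma one_sub_add_mul_exp_pos (hp0 : 0 ≤ p) (hp1 : p ≤ 1) (x : ℝ) :
    0 < 1 - p + p * exp x := by
  nlinarith [exp_pos x, mul_nonneg hp0 (exp_pos x).le]

lemma bernCgf_zero (p : ℝ) : bernCgf p 0 = 0 := by simp [bernCgf]

lemma abs_bernCgf_sub_bernCgf_neg_sub_le (hp0 : 0 ≤ p) (hp1 : p ≤ 1) (hx : |x| ≤ 1 / 4) :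
    |bernCgf p x - bernCgf p (-x) - 2 * p * x| ≤ 40 * p * |x| ^ 3 := by
  have hx1 : |x| ≤ 1 := by linarith
  have hx0 := abs_nonneg x
  set a := exp x - 1
  set b := exp (-x) - 1
  have ha : |p * a| ≤ 2 * (p * |x|) := by
    rw [abs_mul, abs_of_nonneg hp0]; nlinarith [abs_exp_sub_one_le hx1]
  have hb : |p * b| ≤ 2 * (p * |x|) := by
    have h := abs_exp_sub_one_le (x := -x) (by rwa [abs_neg])
    rw [abs_neg] at h
    rw [abs_mul, abs_of_nonneg hp0]; nlinarith
  have hpx : p * |x| ≤ 1 / 4 := by nlinarith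
  have cube_le : ∀ {u : ℝ}, |u| ≤ 2 * (p * |x|) → 2 * |u| ^ 3 ≤ 16 * p * |x| ^ 3 := by
    intro u hu
    have h3 := pow_le_pow_left₀ (abs_nonneg u) hu 3
    have hp3 : p ^ 3 ≤ p := by nlinarith [mul_nonneg hp0 hp0]
    nlinarith [pow_nonneg hx0 3]
  have hlog_a := abs_le.1 ((abs_log_one_add_sub_taylor_two_le (by linarith)).trans (cube_le ha))
  have hlog_b := abs_le.1 ((abs_log_one_add_sub_taylor_two_le (by linarith)).trans (cube_le hb))
  have hcross : |2 * p ^ 2 * (sinh x * (cosh x - 1))| ≤ 4 * p * |x| ^ 3 := by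
    rw [abs_mul, abs_of_nonneg (by positivity)]
    calc 2 * p ^ 2 * |sinh x * (cosh x - 1)| ≤ 2 * p * (2 * |x| ^ 3) := by
          gcongr
          · nlinarith
          · exact abs_sinh_mul_cosh_sub_one_le hx1
      _ = 4 * p * |x| ^ 3 := by ring
  have hsinh := abs_le.1 (abs_sinh_sub_self_le hx1)
  -- `a - b = 2 sinh x` and `a² - b² = 4 sinh x (cosh x - 1)`
  have key : bernCgf p x - bernCgf p (-x) - 2 * p * x
      = (log (1 + p * a) - (p * a - (p * a) ^ 2 / 2))
        - (log (1 + p * b) - (p * b - (p * b) ^ 2 / 2))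
        + 2 * p * (sinh x - x) - 2 * p ^ 2 * (sinh x * (cosh x - 1)) := by
    simp only [bernCgf, a, b, sinh_eq, cosh_eq]
    ring_nf
  rw [key, abs_le]
  have hc := abs_le.1 hcross
  constructor <;> nlinarith [mul_nonneg hp0 (pow_nonneg hx0 3)]

lemma bernCgf_add_bernCgf_neg (hp0 : 0 ≤ p) (hp1 : p ≤ 1) (x : ℝ) :
    bernCgf p x + bernCgf p (-x) = log (1 + 2 * p * (1 - p) * (cosh x - 1)) := by
  rw [bernCgf, bernCgf, ← log_mul (one_sub_add_mul_exp_pos hp0 hp1 x).ne'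
    (one_sub_add_mul_exp_pos hp0 hp1 (-x)).ne', cosh_eq]
  have hexp : exp x * exp (-x) = 1 := by rw [← exp_add, add_neg_cancel, exp_zero]
  congr 1
  linear_combination p ^ 2 * hexp

lemma abs_bernCgf_add_bernCgf_neg_sub_le (hp0 : 0 ≤ p) (hp1 : p ≤ 1) (hx : |x| ≤ 1 / 4) :
    |bernCgf p x + bernCgf p (-x) - (2 * p * (cosh x - 1) - p ^ 2 * x ^ 2)|
      ≤ 10 * p ^ 2 * x ^ 4 := by
  have hx1 : |x| ≤ 1 := by linarith
  have hcosh0 : 0 ≤ cosh x - 1 := by linarith [one_le_cosh x]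
  have hcosh := cosh_sub_one_le_sq hx1
  set u := 2 * p * (1 - p) * (cosh x - 1)
  have hu0 : 0 ≤ u := mul_nonneg (by nlinarith) hcosh0
  have hu : u ≤ 2 * p * x ^ 2 := by
    have : 2 * p * (1 - p) ≤ 2 * p := by nlinarith
    calc u ≤ 2 * p * (cosh x - 1) := mul_le_mul_of_nonneg_right this hcosh0
      _ ≤ 2 * p * x ^ 2 := by gcongr
  have hx2 : x ^ 2 ≤ 1 / 16 := by rw [← sq_abs]; nlinarith [abs_nonneg x]
  have hlog := abs_le.1 (abs_log_one_add_sub_self_le (u := u)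
    (by rw [abs_of_nonneg hu0]; nlinarith))
  have htaylor := abs_le.1 (abs_cosh_sub_one_sub_sq_le hx1)
  have hu2 : u ^ 2 ≤ 4 * p ^ 2 * x ^ 4 := by nlinarith
  have key : bernCgf p x + bernCgf p (-x) - (2 * p * (cosh x - 1) - p ^ 2 * x ^ 2)
      = (log (1 + u) - u) - 2 * p ^ 2 * (cosh x - 1 - x ^ 2 / 2) := by
    rw [bernCgf_add_bernCgf_neg hp0 hp1]; ring
  rw [key, abs_le]
  constructor <;> nlinarith [sq_nonneg p]

end BernCgf

set_option linter.deprecated false in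
lemma integral_bernoulli_toMeasure {r : NNReal} (hr : r ≤ 1) (f : Bool → ℝ) :
    ∫ b, f b ∂(PMF.bernoulli r hr).toMeasure = (1 - r) * f false + r * f true := by
  simp only [PMF.integral_eq_sum, Fintype.sum_bool, PMF.bernoulli_apply, cond_true, cond_false,
    ENNReal.coe_toReal, NNReal.coe_sub hr, NNReal.coe_one, smul_eq_mul]
  ring

lemma integral_prod_bern {N : ℕ} {p : ℝ} (hp0 : 0 ≤ p) (hp1 : p ≤ 1)
    (g : Fin N × Fin N → Bool → ℝ) :
    ∫ ω, ∏ q, g q (ω q) ∂(bern N p) = ∏ q, ((1 - p) * g q false + p * g q true) := by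
  have hr : min 1 p.toNNReal = p.toNNReal := min_eq_right (Real.toNNReal_le_one.2 hp1)
  rw [bern, integral_fintype_prod_eq_prod]
  simp only [integral_bernoulli_toMeasure, hr, Real.coe_toNNReal _ hp0]

lemma spin_mul_self (b : Bool) : spin b * spin b = 1 := by cases b <;> simp [spin]

lemma neg_mul_hamil_eq_sum (N : ℕ) (p β : ℝ) (ω : Fin N × Fin N → Bool) (σ : Fin N → Bool) :
    -β * hamil N p ω σ
      = ∑ q : Fin N × Fin N,
          β / (2 * N * p) * (if ω q then 1 else 0) * (spin (σ q.1) * spin (σ q.2)) := by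
  rw [hamil, Fintype.sum_prod_type, mul_sum, mul_sum]
  refine sum_congr rfl fun i _ => ?_
  rw [mul_sum, mul_sum]
  refine sum_congr rfl fun j _ => ?_
  ring

lemma apply_add_of_mul_self_eq_one {f : ℝ → ℝ} (hf : f 0 = 0) {s t : ℝ} (hs : s * s = 1)
    (ht : t * t = 1) :
    f (s + t) = (s + t) ^ 2 / 8 * (f 2 + f (-2)) + (s + t) / 4 * (f 2 - f (-2)) := by
  rcases mul_self_eq_one_iff.1 hs with rfl | rfl <;>
    rcases mul_self_eq_one_iff.1 ht with rfl | rfl <;> norm_num [hf] <;> ring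

section SumIdentities

variable {ι : Type*} [Fintype ι] (x y : ι → ℝ)

lemma sum_sum_mul_add_mul :
    ∑ i, ∑ j, (x i * x j + y i * y j) = (∑ i, x i) ^ 2 + (∑ i, y i) ^ 2 := by
  simp only [sum_add_distrib, ← mul_sum, ← sum_mul, sq]

lemma sum_sum_mul_add_mul_sq :
    ∑ i, ∑ j, (x i * x j + y i * y j) ^ 2
      = (∑ i, x i ^ 2) ^ 2 + 2 * (∑ i, x i * y i) ^ 2 + (∑ i, y i ^ 2) ^ 2 := by
  calc ∑ i, ∑ j, (x i * x j + y i * y j) ^ 2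
      = ∑ i, ∑ j,
          (x i ^ 2 * x j ^ 2 + 2 * ((x i * y i) * (x j * y j)) + y i ^ 2 * y j ^ 2) := by
        simp only [add_sq, mul_pow]; ring_nf
    _ = _ := by simp only [sum_add_distrib, ← mul_sum, ← sum_mul]; ring

end SumIdentities

lemma sum_spin_sq {N : ℕ} (σ : Fin N → Bool) : ∑ i, spin (σ i) ^ 2 = N := by
  simp [sq, spin_mul_self]

lemma spin_mul_spin_mul_self (b b' : Bool) : (spin b * spin b') * (spin b * spin b') = 1 := by
  linear_combination (spin b' * spin b') * spin_mul_self b + spin_mul_self b'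

def pairEdgeSpin {N : ℕ} (σ τ : Fin N → Bool) (q : Fin N × Fin N) : ℝ :=
  spin (σ q.1) * spin (σ q.2) + spin (τ q.1) * spin (τ q.2)

lemma sum_pairEdgeSpin {N : ℕ} (σ τ : Fin N → Bool) :
    ∑ q, pairEdgeSpin σ τ q = mag σ ^ 2 + mag τ ^ 2 := by
  rw [Fintype.sum_prod_type]
  exact sum_sum_mul_add_mul (fun i => spin (σ i)) (fun i => spin (τ i))

lemma sum_pairEdgeSpin_sq {N : ℕ} (σ τ : Fin N → Bool) :
    ∑ q, pairEdgeSpin σ τ q ^ 2 = 2 * (N : ℝ) ^ 2 + 2 * magPair σ τ ^ 2 := by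
  rw [Fintype.sum_prod_type]
  simp only [pairEdgeSpin]
  rw [sum_sum_mul_add_mul_sq (fun i => spin (σ i)) (fun i => spin (τ i)), sum_spin_sq,
    sum_spin_sq, magPair]
  ring

lemma exp_neg_mul_hamil_mul_exp {N : ℕ} (p β : ℝ) (ω : Fin N × Fin N → Bool)
    (σ τ : Fin N → Bool) :
    exp (-β * hamil N p ω σ) * exp (-β * hamil N p ω τ)
      = ∏ q, exp (β / (2 * N * p) * (if ω q then 1 else 0) * pairEdgeSpin σ τ q) := by
  rw [← exp_add, neg_mul_hamil_eq_sum, neg_mul_hamil_eq_sum, ← sum_add_distrib, exp_sum]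
  exact prod_congr rfl fun q _ => congrArg exp (by rw [pairEdgeSpin]; ring)

lemma log_integral_exp_hamil_pair {N : ℕ} {p : ℝ} (hp0 : 0 ≤ p) (hp1 : p ≤ 1) (β : ℝ)
    (σ τ : Fin N → Bool) :
    log (∫ ω, exp (-β * hamil N p ω σ) * exp (-β * hamil N p ω τ) ∂(bern N p))
      = ((N : ℝ) ^ 2 + magPair σ τ ^ 2) / 4
          * (bernCgf p (β / (N * p)) + bernCgf p (-(β / (N * p))))
        + (mag σ ^ 2 + mag τ ^ 2) / 4
          * (bernCgf p (β / (N * p)) - bernCgf p (-(β / (N * p)))) := by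
  set c := β / (2 * N * p)
  have interp : ∀ q, bernCgf p (c * pairEdgeSpin σ τ q)
      = pairEdgeSpin σ τ q ^ 2 / 8 * (bernCgf p (β / (N * p)) + bernCgf p (-(β / (N * p))))
        + pairEdgeSpin σ τ q / 4 * (bernCgf p (β / (N * p)) - bernCgf p (-(β / (N * p)))) := by
    intro q
    rw [show -(β / (N * p)) = c * (-2) by ring, show β / (N * p) = c * 2 by ring]
    exact apply_add_of_mul_self_eq_one (f := fun y => bernCgf p (c * y)) (by simp [bernCgf_zero])
      (spin_mul_spin_mul_self _ _) (spin_mul_spin_mul_self _ _)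
  simp only [exp_neg_mul_hamil_mul_exp]
  rw [integral_prod_bern hp0 hp1 fun q b => exp (c * (if b then 1 else 0) * pairEdgeSpin σ τ q)]
  simp only [if_true, if_false, Bool.false_eq_true, mul_zero, zero_mul, mul_one, exp_zero]
  rw [log_prod fun q _ => (one_sub_add_mul_exp_pos hp0 hp1 _).ne']
  change ∑ q, bernCgf p _ = _
  rw [sum_congr rfl fun q _ => interp q, sum_add_distrib, ← sum_mul, ← sum_mul, ← sum_div,
    ← sum_div, sum_pairEdgeSpin, sum_pairEdgeSpin_sq]
  ring

lemma abs_expansion_error_le {n p x β M Q D S ch : ℝ} (hn : 0 < n) (hp : 0 < p) (hβ : 0 ≤ β)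
    (hM : 0 ≤ M) (hQ : 0 ≤ Q) (hx : x = β / (n * p))
    (hD : |D - 2 * p * x| ≤ 40 * p * |x| ^ 3)
    (hS : |S - (2 * p * (ch - 1) - p ^ 2 * x ^ 2)| ≤ 10 * p ^ 2 * x ^ 4) :
    |(n ^ 2 + Q) / 4 * S + M / 4 * D - β / 2 * (M / n) - (n ^ 2 * p / 2 * (ch - 1) - β ^ 2 / 4)
        * (1 + Q / n ^ 2)|
      ≤ (10 * β ^ 3 + 5 / 2 * β ^ 4) / (n ^ 2 * p ^ 2) * (M / n + 1 + Q / n ^ 2) := by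
  have hβx : β = x * (n * p) := by rw [hx]; field_simp
  have split : (n ^ 2 + Q) / 4 * S + M / 4 * D - β / 2 * (M / n)
        - (n ^ 2 * p / 2 * (ch - 1) - β ^ 2 / 4) * (1 + Q / n ^ 2)
      = M / 4 * (D - 2 * p * x) + (n ^ 2 + Q) / 4 * (S - (2 * p * (ch - 1) - p ^ 2 * x ^ 2)) := by
    rw [hβx]; field_simp; ring
  have hβ3 : 40 * p * |x| ^ 3 = 40 * β ^ 3 / (n ^ 3 * p ^ 2) := by
    rw [hx, abs_of_nonneg (by positivity)]; field_simp
  have hβ4 : 10 * p ^ 2 * x ^ 4 = 10 * β ^ 4 / (n ^ 4 * p ^ 2) := by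
    rw [hx]; field_simp
  rw [split]
  calc _ ≤ M / 4 * (40 * p * |x| ^ 3) + (n ^ 2 + Q) / 4 * (10 * p ^ 2 * x ^ 4) := by
        refine (abs_add_le _ _).trans (add_le_add ?_ ?_) <;>
          rw [abs_mul, abs_of_nonneg (by positivity)] <;> gcongr
    _ = (10 * β ^ 3 * (M / n) + 5 / 2 * β ^ 4 * (1 + Q / n ^ 2)) / (n ^ 2 * p ^ 2) := by
        rw [hβ3, hβ4]; field_simp; ring
    _ ≤ _ := by
        rw [div_mul_eq_mul_div (10 * β ^ 3 + 5 / 2 * β ^ 4)]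
        gcongr
        have h3 : 0 ≤ 10 * β ^ 3 * (1 + Q / n ^ 2) := by positivity
        have h4 : 0 ≤ 5 / 2 * β ^ 4 * (M / n) := by positivity
        nlinarith

/-- **Lemma 5.** For fixed `β > 0` and `p = p(N)` with `pN → ∞`, there is `C > 0` such that
for all large `N` and all `σ, τ ∈ {-1,+1}^N`,
`|log 𝔼[e^{-βH(σ)}e^{-βH(τ)}] - (β/2)(|σ|²+|τ|²)/N - ((N²p/2)(cosh(β/(Np)) - 1) - β²/4)(1 + |στ|²/N²)|
  ≤ C/(N²p²) · ((|σ|²+|τ|²)/N + 1 + |στ|²/N²)`. -/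
theorem log_expectation_exp_H_pair (β : ℝ) (hβ : 0 < β)
    (p : ℕ → ℝ) (hp : ∀ N, p N ∈ Set.Ioc (0 : ℝ) 1)
    (hpN : Tendsto (fun N : ℕ => p N * (N : ℝ)) atTop atTop) :
    ∃ C > (0 : ℝ), ∀ᶠ N : ℕ in atTop, ∀ σ τ : Fin N → Bool,
      |Real.log (∫ ω, Real.exp (-β * hamil N (p N) ω σ) *
            Real.exp (-β * hamil N (p N) ω τ) ∂(bern N (p N)))
          - β / 2 * (((mag σ) ^ 2 + (mag τ) ^ 2) / N)
          - ((N : ℝ) ^ 2 * p N / 2 * (Real.cosh (β / (N * p N)) - 1) - β ^ 2 / 4) *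
              (1 + (magPair σ τ) ^ 2 / (N : ℝ) ^ 2)|
        ≤ C / ((N : ℝ) ^ 2 * (p N) ^ 2) *
            (((mag σ) ^ 2 + (mag τ) ^ 2) / N + 1 + (magPair σ τ) ^ 2 / (N : ℝ) ^ 2) := by
  refine ⟨10 * β ^ 3 + 5 / 2 * β ^ 4, by positivity, ?_⟩
  filter_upwards [hpN.eventually_ge_atTop (4 * β)] with N hN σ τ
  obtain ⟨hp0, hp1⟩ := hp N
  have hNp : 0 < N * p N := by nlinarith
  have hN : (0 : ℝ) < N := pos_of_mul_pos_left hNp hp0.le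
  have hx : |β / (N * p N)| ≤ 1 / 4 := by
    rw [abs_of_pos (div_pos hβ hNp), div_le_iff₀ hNp]; linarith
  rw [log_integral_exp_hamil_pair hp0.le hp1]
  exact abs_expansion_error_le hN hp0 hβ.le (by positivity) (by positivity) rfl
    (abs_bernCgf_sub_bernCgf_neg_sub_le hp0.le hp1 hx)
    (abs_bernCgf_add_bernCgf_neg_sub_le hp0.le hp1 hx)

end
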